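/- Let p > d, σ ≠ 0, b ∈ L^p(ℝ^d; ℝ^d), and v ∈ H¹(ℝ^d). Then |∫ v (b·∇v) dx| ≤ (σ²/2) ∫ |∇v|² dx + C (∫ v² dx) (∫ |b|^p dx)^{2/(p−d)}, where C depends only on d, p, σ. -/

import Mathlib

/-!
Hölder's inequality with exponents `q = 2p/(p-2)`, `p` and `2` bounds `∫ v (b·∇v)` by
`‖v‖_q ‖b‖_p ‖∇v‖_2`. The Gagliardo–Nirenberg inequality `‖v‖_q ≤ C ‖∇v‖_2^θ ‖v‖_2^(1-θ)` with
`θ = d/p` turns this into `C ‖∇v‖_2^(1+θ) ‖v‖_2^(1-θ) ‖b‖_p`, and Young's inequality with the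
conjugate exponents `2/(1+θ)` and `2/(1-θ)` absorbs the gradient factor into `(σ²/2) ‖∇v‖_2²`.

Gagliardo–Nirenberg follows by interpolating between `L²` and an endpoint estimate: the Sobolev
embedding into `L^(2d/(d-2))` when `d ≥ 3`; when `d = 2`, the `L¹` Sobolev inequality applied to
`v^(k+1)` gives `‖v‖_(2k+2)^(k+1) ≲ (k+1) ‖v‖_(2k)^k ‖∇v‖_2`, which is iterated; when `d = 1`,
the pointwise bound `|v|² ≤ 2 ‖v‖_2 ‖v'‖_2`.
-/

open MeasureTheory Module RealInnerProductSpace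
open scoped ENNReal NNReal

namespace MeasureTheory

variable {α F : Type*} [MeasurableSpace α] {μ : Measure α} [NormedAddCommGroup F]

theorem eLpNorm_ofReal_eq_lintegral {f : α → F} {p : ℝ} (hp : 0 < p) :
    eLpNorm f (.ofReal p) μ = (∫⁻ x, ‖f x‖ₑ ^ p ∂μ) ^ p⁻¹ := by
  rw [eLpNorm_eq_lintegral_rpow_enorm_toReal (by simpa using hp) ENNReal.ofReal_ne_top,
    ENNReal.toReal_ofReal hp.le, one_div]

theorem eLpNorm_le_eLpNorm_rpow_mul_eLpNorm_rpow {f : α → F} (hf : AEStronglyMeasurable f μ)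
    {p₀ p₁ q s : ℝ} (hp₀ : 0 < p₀) (hp₁ : 0 < p₁) (hs₀ : 0 ≤ s) (hs₁ : s ≤ 1)
    (hq : q⁻¹ = (1 - s) / p₀ + s / p₁) :
    eLpNorm f (.ofReal q) μ ≤
      eLpNorm f (.ofReal p₀) μ ^ (1 - s) * eLpNorm f (.ofReal p₁) μ ^ s := by
  have hs₁' : 0 ≤ 1 - s := by linarith
  have hq0 : 0 < q := by
    rw [← inv_pos, hq]
    rcases hs₀.eq_or_lt with rfl | hs
    · simpa using hp₀
    · exact add_pos_of_nonneg_of_pos (by positivity) (by positivity)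
  have hw : (1 - s) * q / p₀ + s * q / p₁ = 1 := by
    rw [mul_div_right_comm, mul_div_right_comm s, ← add_mul, ← hq, inv_mul_cancel₀ hq0.ne']
  have hholder : ∫⁻ x, ‖f x‖ₑ ^ q ∂μ ≤
      (∫⁻ x, ‖f x‖ₑ ^ p₀ ∂μ) ^ ((1 - s) * q / p₀) * (∫⁻ x, ‖f x‖ₑ ^ p₁ ∂μ) ^ (s * q / p₁) := by
    convert ENNReal.lintegral_mul_norm_pow_le (hf.enorm.pow_const p₀) (hf.enorm.pow_const p₁)
      (by positivity) (by positivity) hw using 3 with x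
    rw [← ENNReal.rpow_mul, ← ENNReal.rpow_mul,
      ← ENNReal.rpow_add_of_nonneg _ _ (by positivity) (by positivity)]
    congr 1
    field_simp
    ring
  rw [eLpNorm_ofReal_eq_lintegral hq0, eLpNorm_ofReal_eq_lintegral hp₀,
    eLpNorm_ofReal_eq_lintegral hp₁, ← ENNReal.rpow_mul, ← ENNReal.rpow_mul]
  calc (∫⁻ x, ‖f x‖ₑ ^ q ∂μ) ^ q⁻¹
      ≤ ((∫⁻ x, ‖f x‖ₑ ^ p₀ ∂μ) ^ ((1 - s) * q / p₀) *
          (∫⁻ x, ‖f x‖ₑ ^ p₁ ∂μ) ^ (s * q / p₁)) ^ q⁻¹ := by gcongr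
    _ = _ := by
      rw [ENNReal.mul_rpow_of_nonneg _ _ (by positivity), ← ENNReal.rpow_mul, ← ENNReal.rpow_mul]
      congr 2 <;> field_simp

theorem eLpNorm_pow_eq {𝕜 : Type*} [NormedDivisionRing 𝕜] (f : α → 𝕜) (p : ℝ≥0∞) {m : ℕ}
    (hm : m ≠ 0) : eLpNorm (f ^ m) p μ = eLpNorm f (p * m) μ ^ m := by
  have := eLpNorm_norm_rpow (p := p) (μ := μ) f (q := m) (by positivity)
  simp only [Real.rpow_natCast, ENNReal.rpow_natCast, ENNReal.ofReal_natCast] at this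
  rw [← this]
  exact eLpNorm_congr_norm_ae (.of_forall fun x => by simp)

theorem lpNorm_ofReal_rpow_eq_integral {f : α → F} (hf : AEStronglyMeasurable f μ) {p : ℝ}
    (hp : 0 < p) : lpNorm f (.ofReal p) μ ^ p = ∫ x, ‖f x‖ ^ p ∂μ := by
  rw [lpNorm_eq_integral_norm_rpow_toReal (by simpa using hp) ENNReal.ofReal_ne_top hf,
    ENNReal.toReal_ofReal hp.le, Real.rpow_inv_rpow (by positivity) hp.ne']

theorem lpNorm_two_sq_eq_integral {f : α → F} (hf : AEStronglyMeasurable f μ) :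
    lpNorm f 2 μ ^ 2 = ∫ x, ‖f x‖ ^ 2 ∂μ := by
  simpa [Real.rpow_two] using lpNorm_ofReal_rpow_eq_integral hf two_pos

theorem lintegral_enorm_mul_inner_le {E : Type*} [NormedAddCommGroup E] [InnerProductSpace ℝ E]
    {f : α → ℝ} {b g : α → E} (hf : AEStronglyMeasurable f μ) (hb : AEStronglyMeasurable b μ)
    (hg : AEStronglyMeasurable g μ) {p q : ℝ≥0∞} [ENNReal.HolderTriple q p 2] :
    ∫⁻ x, ‖f x * ⟪b x, g x⟫‖ₑ ∂μ ≤ eLpNorm f q μ * eLpNorm b p μ * eLpNorm g 2 μ := by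
  calc ∫⁻ x, ‖f x * ⟪b x, g x⟫‖ₑ ∂μ = eLpNorm (fun x => ⟪(f • b) x, g x⟫) 1 μ := by
        simp [eLpNorm_one_eq_lintegral_enorm, real_inner_smul_left]
    _ ≤ 1 * eLpNorm (f • b) 2 μ * eLpNorm g 2 μ :=
        eLpNorm_le_eLpNorm_mul_eLpNorm'_of_norm (hf.smul hb) hg _ 1
          (.of_forall fun x => by simpa using norm_inner_le_norm (𝕜 := ℝ) (f x • b x) (g x))
    _ ≤ eLpNorm f q μ * eLpNorm b p μ * eLpNorm g 2 μ := by
        rw [one_mul]; gcongr; exact eLpNorm_smul_le_mul_eLpNorm hb hf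

end MeasureTheory

theorem Real.exists_mul_le_mul_rpow_add_mul_rpow {p q ε : ℝ} (hpq : p.HolderConjugate q)
    (hε : 0 < ε) : ∃ K : ℝ, 0 ≤ K ∧ ∀ x y : ℝ, 0 ≤ x → 0 ≤ y → x * y ≤ ε * x ^ p + K * y ^ q := by
  have hp := hpq.pos
  have hq := hpq.symm.pos
  set l : ℝ := (ε * p) ^ p⁻¹
  have hl : 0 < l := by positivity
  have hlp : l ^ p = ε * p := by
    rw [← Real.rpow_mul (by positivity), inv_mul_cancel₀ hp.ne', Real.rpow_one]
  refine ⟨l⁻¹ ^ q / q, by positivity, fun x y hx hy => ?_⟩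
  calc x * y = (l * x) * (l⁻¹ * y) := by field_simp
    _ ≤ (l * x) ^ p / p + (l⁻¹ * y) ^ q / q :=
      Real.young_inequality_of_nonneg (by positivity) (by positivity) hpq
    _ = ε * x ^ p + l⁻¹ ^ q / q * y ^ q := by
      rw [Real.mul_rpow hl.le hx, Real.mul_rpow (by positivity) hy, hlp]
      field_simp

theorem exists_mul_rpow_mul_rpow_le {C ε θ : ℝ} (hC : 0 ≤ C) (hε : 0 < ε) (hθ₀ : -1 < θ)
    (hθ₁ : θ < 1) : ∃ K : ℝ, 0 ≤ K ∧ ∀ a w β : ℝ, 0 ≤ a → 0 ≤ w → 0 ≤ β →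
      C * a ^ (1 + θ) * w ^ (1 - θ) * β ≤ ε * a ^ 2 + K * w ^ 2 * β ^ (2 / (1 - θ)) := by
  have hpos : 0 < 1 + θ := by linarith
  have hpos' : 0 < 1 - θ := by linarith
  have hconj : (2 / (1 + θ)).HolderConjugate (2 / (1 - θ)) := by
    rw [Real.holderConjugate_iff, one_lt_div hpos]
    exact ⟨by linarith, by field_simp; ring⟩
  obtain ⟨K, hK, hyoung⟩ := Real.exists_mul_le_mul_rpow_add_mul_rpow hconj hε
  refine ⟨K * C ^ (2 / (1 - θ)), by positivity, fun a w β ha hw hβ => ?_⟩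
  calc C * a ^ (1 + θ) * w ^ (1 - θ) * β = a ^ (1 + θ) * (C * w ^ (1 - θ) * β) := by ring
    _ ≤ ε * (a ^ (1 + θ)) ^ (2 / (1 + θ)) + K * (C * w ^ (1 - θ) * β) ^ (2 / (1 - θ)) :=
      hyoung _ _ (by positivity) (by positivity)
    _ = ε * a ^ 2 + K * C ^ (2 / (1 - θ)) * w ^ 2 * β ^ (2 / (1 - θ)) := by
      rw [Real.mul_rpow (by positivity) hβ, Real.mul_rpow hC (by positivity), ← Real.rpow_mul ha,
        ← Real.rpow_mul hw, mul_div_cancel₀ _ hpos.ne', mul_div_cancel₀ _ hpos'.ne', Real.rpow_two,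
        Real.rpow_two]
      ring

theorem enorm_sq_le_eLpNorm_mul_eLpNorm_deriv {g : ℝ → ℝ} (hg : ContDiff ℝ 1 g)
    (h2g : HasCompactSupport g) (t : ℝ) :
    ‖g t‖ₑ ^ 2 ≤ 2 * eLpNorm g 2 volume * eLpNorm (deriv g) 2 volume := by
  have hderiv : deriv (g ^ 2) = ((2 : ℝ) • g) • deriv g := by
    ext1 s
    rw [deriv_pow (hg.differentiable one_ne_zero s)]
    simp [mul_assoc]
  calc ‖g t‖ₑ ^ 2 = ‖(g ^ 2) t‖ₑ := by simp [enorm_pow]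
    _ ≤ ∫⁻ s in Set.Iic t, ‖deriv (g ^ 2) s‖ₑ :=
      HasCompactSupport.enorm_le_lintegral_Ici_deriv (f := g ^ 2) (hg.pow 2)
        (by rw [sq]; exact h2g.mul_left) t
    _ ≤ eLpNorm (deriv (g ^ 2)) 1 volume := by
      rw [eLpNorm_one_eq_lintegral_enorm]; exact setLIntegral_le_lintegral _ _
    _ ≤ eLpNorm ((2 : ℝ) • g) 2 volume * eLpNorm (deriv g) 2 volume := by
      rw [hderiv]
      exact eLpNorm_smul_le_mul_eLpNorm (hg.continuous_deriv le_rfl).aestronglyMeasurable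
        (hg.continuous.const_smul _).aestronglyMeasurable
    _ = 2 * eLpNorm g 2 volume * eLpNorm (deriv g) 2 volume := by
      rw [eLpNorm_const_smul, ← Nat.cast_ofNat, Real.enorm_natCast]
      rfl

section NormedSpace

variable {E : Type*} [NormedAddCommGroup E] [NormedSpace ℝ E] [MeasurableSpace E] [BorelSpace E]

def GagliardoNirenberg (μ : Measure E) (q θ : ℝ) : Prop :=
  ∃ C : ℝ≥0, ∀ v : E → ℝ, ContDiff ℝ 1 v → HasCompactSupport v →
    eLpNorm v (.ofReal q) μ ≤ C * eLpNorm (fderiv ℝ v) 2 μ ^ θ * eLpNorm v 2 μ ^ (1 - θ)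

theorem GagliardoNirenberg.interpolate {μ : Measure E} {q r s θ : ℝ}
    (h : GagliardoNirenberg μ r θ) (hr : 0 < r) (hs₀ : 0 ≤ s) (hs₁ : s ≤ 1) (hθ : θ ≤ 1)
    (hq : q⁻¹ = (1 - s) / 2 + s / r) :
    GagliardoNirenberg μ q (s * θ) := by
  obtain ⟨C, hC⟩ := h
  refine ⟨C ^ s, fun v hv h2v => ?_⟩
  set A := eLpNorm (fderiv ℝ v) 2 μ
  set V := eLpNorm v 2 μ
  have hV : eLpNorm v (.ofReal 2) μ = V := by rw [ENNReal.ofReal_ofNat]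
  rw [ENNReal.coe_rpow_of_nonneg _ hs₀]
  calc eLpNorm v (.ofReal q) μ
      ≤ V ^ (1 - s) * eLpNorm v (.ofReal r) μ ^ s := by
        simpa only [hV] using eLpNorm_le_eLpNorm_rpow_mul_eLpNorm_rpow (μ := μ)
          hv.continuous.aestronglyMeasurable two_pos hr hs₀ hs₁ hq
    _ ≤ V ^ (1 - s) * (C * A ^ θ * V ^ (1 - θ)) ^ s := by gcongr; exact hC v hv h2v
    _ = C ^ s * A ^ (s * θ) * V ^ (1 - s * θ) := by
        rw [ENNReal.mul_rpow_of_nonneg _ _ hs₀, ENNReal.mul_rpow_of_nonneg _ _ hs₀,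
          ← ENNReal.rpow_mul, ← ENNReal.rpow_mul, mul_comm θ s, mul_left_comm, mul_assoc,
          ← ENNReal.rpow_add_of_nonneg _ _ (by linarith) (by nlinarith)]
        ring_nf

variable [FiniteDimensional ℝ E] (μ : Measure E) [μ.IsAddHaarMeasure]

theorem GagliardoNirenberg.of_three_le_finrank (hn : 3 ≤ finrank ℝ E) {q : ℝ} (hq : 2 ≤ q)
    (hθ : (finrank ℝ E : ℝ) * (2⁻¹ - q⁻¹) ≤ 1) :
    GagliardoNirenberg μ q ((finrank ℝ E : ℝ) * (2⁻¹ - q⁻¹)) := by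
  have hn' : (3 : ℝ) ≤ finrank ℝ E := by exact_mod_cast hn
  set r : ℝ := 2 * finrank ℝ E / (finrank ℝ E - 2) with hr_def
  have hr : 0 < r := div_pos (by linarith) (by linarith)
  have hsobolev : GagliardoNirenberg μ r 1 := by
    refine ⟨SNormLESNormFDerivOfEqConst ℝ μ 2, fun v hv h2v => ?_⟩
    have := eLpNorm_le_eLpNorm_fderiv_of_eq μ hv h2v (p := 2) (p' := r.toNNReal) one_le_two
      (by omega) (by rw [Real.coe_toNNReal _ hr.le, hr_def]; push_cast; field_simp)
    simp only [ENNReal.coe_ofNat, NNReal.coe_ofNat] at this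
    simp only [ENNReal.rpow_one, sub_self, ENNReal.rpow_zero, mul_one]
    exact this
  have hs₀ : 0 ≤ (finrank ℝ E : ℝ) * (2⁻¹ - q⁻¹) :=
    mul_nonneg (by linarith) (by field_simp; linarith)
  simpa using hsobolev.interpolate hr hs₀ hθ le_rfl (by rw [hr_def]; field_simp; ring)

theorem eLpNorm_pow_succ_le_of_finrank_eq_two (hE : finrank ℝ E = 2) {v : E → ℝ}
    (hv : ContDiff ℝ 1 v) (h2v : HasCompactSupport v) {m : ℕ} (hm : m ≠ 0) :
    eLpNorm v (2 * (m + 1)) μ ^ (m + 1) ≤ eLpNormLESNormFDerivOneConst μ 2 * (m + 1) *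
      eLpNorm v (2 * m) μ ^ m * eLpNorm (fderiv ℝ v) 2 μ := by
  have hconj : NNReal.HolderConjugate (finrank ℝ E) 2 := by
    rw [hE]; exact NNReal.HolderConjugate.two_two
  have hderiv : fderiv ℝ (v ^ (m + 1)) = ((m + 1 : ℝ) • v ^ m) • fderiv ℝ v := by
    ext1 x
    rw [fderiv_pow _ (hv.differentiable one_ne_zero x)]
    simp [nsmul_eq_mul]
  calc eLpNorm v (2 * (m + 1)) μ ^ (m + 1)
      = eLpNorm (v ^ (m + 1)) 2 μ := by
        rw [eLpNorm_pow_eq _ _ (Nat.succ_ne_zero m)]; push_cast; rfl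
    _ ≤ eLpNormLESNormFDerivOneConst μ 2 * eLpNorm (fderiv ℝ (v ^ (m + 1))) 1 μ := by
        simpa only [ENNReal.coe_ofNat, NNReal.coe_ofNat] using
          eLpNorm_le_eLpNorm_fderiv_one (u := v ^ (m + 1)) μ (hv.pow (m + 1))
            (h2v.comp_left (g := fun t : ℝ => t ^ (m + 1)) (by simp)) hconj
    _ ≤ eLpNormLESNormFDerivOneConst μ 2 * ((m + 1) * eLpNorm v (2 * m) μ ^ m *
          eLpNorm (fderiv ℝ v) 2 μ) := by
        gcongr
        rw [hderiv]
        refine (eLpNorm_smul_le_mul_eLpNorm (p := 2) (q := 2)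
          (hv.continuous_fderiv one_ne_zero).aestronglyMeasurable
          ((hv.continuous.pow m).const_smul _).aestronglyMeasurable).trans_eq ?_
        rw [eLpNorm_const_smul, eLpNorm_pow_eq _ _ hm]
        norm_cast
        rw [Real.enorm_natCast]
    _ = _ := by ring

theorem exists_eLpNorm_pow_le_of_finrank_eq_two (hE : finrank ℝ E = 2) (k : ℕ) :
    ∃ C : ℝ≥0, ∀ v : E → ℝ, ContDiff ℝ 1 v → HasCompactSupport v →
      eLpNorm v (2 * (k + 1)) μ ^ (k + 1) ≤ C * eLpNorm (fderiv ℝ v) 2 μ ^ k * eLpNorm v 2 μ := by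
  induction k with
  | zero => exact ⟨1, fun v _ _ => by simp⟩
  | succ k ih =>
    obtain ⟨C, hC⟩ := ih
    refine ⟨eLpNormLESNormFDerivOneConst μ 2 * (k + 2) * C, fun v hv h2v => ?_⟩
    have hstep := eLpNorm_pow_succ_le_of_finrank_eq_two μ hE hv h2v (m := k + 1) (by omega)
    push_cast at hstep ⊢
    calc eLpNorm v (2 * (k + 1 + 1)) μ ^ (k + 1 + 1)
        ≤ eLpNormLESNormFDerivOneConst μ 2 * (k + 1 + 1) * eLpNorm v (2 * (k + 1)) μ ^ (k + 1) *
            eLpNorm (fderiv ℝ v) 2 μ := hstep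
      _ ≤ eLpNormLESNormFDerivOneConst μ 2 * (k + 1 + 1) *
            (C * eLpNorm (fderiv ℝ v) 2 μ ^ k * eLpNorm v 2 μ) * eLpNorm (fderiv ℝ v) 2 μ := by
          gcongr; exact hC v hv h2v
      _ = _ := by ring

theorem GagliardoNirenberg.of_finrank_eq_two_of_even (hE : finrank ℝ E = 2) (k : ℕ) :
    GagliardoNirenberg μ (2 * (k + 1)) (k / (k + 1)) := by
  have hk : (0 : ℝ) < k + 1 := by positivity
  obtain ⟨C, hC⟩ := exists_eLpNorm_pow_le_of_finrank_eq_two μ hE k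
  refine ⟨C ^ (k + 1 : ℝ)⁻¹, fun v hv h2v => ?_⟩
  set A := eLpNorm (fderiv ℝ v) 2 μ
  set V := eLpNorm v 2 μ
  have hexp : ENNReal.ofReal (2 * (k + 1)) = 2 * (k + 1) := by
    rw [show (2 * (k + 1) : ℝ) = ((2 * (k + 1) : ℕ) : ℝ) by push_cast; ring,
      ENNReal.ofReal_natCast]
    push_cast; ring
  have hrearrange : ((C ^ (k + 1 : ℝ)⁻¹ : ℝ≥0) : ℝ≥0∞) * A ^ (k / (k + 1) : ℝ) *
      V ^ (1 - k / (k + 1) : ℝ) = (C * A ^ k * V) ^ (k + 1 : ℝ)⁻¹ := by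
    rw [ENNReal.coe_rpow_of_nonneg _ (by positivity),
      ENNReal.mul_rpow_of_nonneg _ _ (by positivity),
      ENNReal.mul_rpow_of_nonneg _ _ (by positivity), ← ENNReal.rpow_natCast _ k,
      ← ENNReal.rpow_mul]
    congr 2
    field_simp
    ring
  rw [hexp, hrearrange, ENNReal.le_rpow_inv_iff hk,
    show (k + 1 : ℝ) = ((k + 1 : ℕ) : ℝ) by push_cast; ring, ENNReal.rpow_natCast]
  exact hC v hv h2v

theorem GagliardoNirenberg.of_finrank_eq_two (hE : finrank ℝ E = 2) {q : ℝ} (hq : 2 ≤ q) :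
    GagliardoNirenberg μ q ((finrank ℝ E : ℝ) * (2⁻¹ - q⁻¹)) := by
  set K : ℕ := ⌈q⌉₊
  have hqK : q ≤ K := Nat.le_ceil q
  have hK : (2 : ℝ) ≤ K := hq.trans hqK
  have hq0 : 0 < q := by linarith
  have hs₀ : 0 ≤ (1 - 2 / q) * (K + 1) / K := by
    have : 2 / q ≤ 1 := (div_le_one hq0).2 hq
    have : 0 < (K : ℝ) := by linarith
    positivity
  have hs₁ : (1 - 2 / q) * (K + 1) / K ≤ 1 := by
    have : 1 ≤ 2 * (K + 1) / q := by rw [one_le_div hq0]; linarith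
    rw [div_le_one (by linarith)]
    calc (1 - 2 / q) * (K + 1) = K + 1 - 2 * (K + 1) / q := by ring
      _ ≤ K := by linarith
  convert (of_finrank_eq_two_of_even μ hE K).interpolate (q := q) (by positivity) hs₀ hs₁
    (div_le_one_of_le₀ (by linarith) (by positivity)) (by field_simp; ring) using 1
  rw [hE]
  field_simp
  ring

end NormedSpace

section Gradient

variable {E : Type*} [NormedAddCommGroup E] [InnerProductSpace ℝ E] [CompleteSpace E]

theorem norm_gradient_eq (f : E → ℝ) (x : E) : ‖gradient f x‖ = ‖fderiv ℝ f x‖ :=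
  (InnerProductSpace.toDual ℝ E).symm.norm_map _

theorem ContDiff.continuous_gradient {f : E → ℝ} (hf : ContDiff ℝ 1 f) :
    Continuous (gradient f) :=
  (InnerProductSpace.toDual ℝ E).symm.continuous.comp (hf.continuous_fderiv one_ne_zero)

end Gradient

section InnerProductSpace

variable {E : Type*} [NormedAddCommGroup E] [InnerProductSpace ℝ E] [FiniteDimensional ℝ E]
  [MeasurableSpace E] [BorelSpace E]

theorem enorm_sq_le_eLpNorm_mul_eLpNorm_fderiv_of_finrank_eq_one (hE : finrank ℝ E = 1)
    {v : E → ℝ} (hv : ContDiff ℝ 1 v) (h2v : HasCompactSupport v) (x : E) :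
    ‖v x‖ₑ ^ 2 ≤ 2 * eLpNorm v 2 volume * eLpNorm (fderiv ℝ v) 2 volume := by
  let f : ℝ ≃ₗᵢ[ℝ] E :=
    (OrthonormalBasis.singleton (Fin 1) ℝ).equiv (stdOrthonormalBasis ℝ E) (finCongr hE.symm)
  have hf := f.measurePreserving
  have hderiv : ∀ t, ‖deriv (v ∘ f) t‖ ≤ ‖(fderiv ℝ v ∘ f) t‖ := fun t => by
    have hf1 : deriv f t = f 1 := (f.toContinuousLinearEquiv : ℝ →L[ℝ] E).hasDerivAt.deriv
    rw [fderiv_comp_deriv t (hv.differentiable one_ne_zero _) f.differentiableAt, hf1]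
    simpa using (fderiv ℝ v (f t)).le_opNorm (f 1)
  calc ‖v x‖ₑ ^ 2 = ‖(v ∘ f) (f.symm x)‖ₑ ^ 2 := by simp
    _ ≤ 2 * eLpNorm (v ∘ f) 2 volume * eLpNorm (deriv (v ∘ f)) 2 volume :=
      enorm_sq_le_eLpNorm_mul_eLpNorm_deriv (hv.comp f.contDiff)
        (h2v.comp_homeomorph f.toHomeomorph) _
    _ ≤ 2 * eLpNorm (v ∘ f) 2 volume * eLpNorm (fderiv ℝ v ∘ f) 2 volume := by
      gcongr 2 * _ * ?_
      exact eLpNorm_mono hderiv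
    _ = 2 * eLpNorm v 2 volume * eLpNorm (fderiv ℝ v) 2 volume := by
      rw [eLpNorm_comp_measurePreserving hv.continuous.aestronglyMeasurable hf,
        eLpNorm_comp_measurePreserving (hv.continuous_fderiv one_ne_zero).aestronglyMeasurable hf]

theorem GagliardoNirenberg.of_finrank_eq_one (hE : finrank ℝ E = 1) {q : ℝ} (hq : 2 ≤ q) :
    GagliardoNirenberg (volume : Measure E) q ((finrank ℝ E : ℝ) * (2⁻¹ - q⁻¹)) := by
  have hq0 : 0 < q := by linarith
  have hθ : 0 ≤ (2⁻¹ - q⁻¹ : ℝ) := by rw [sub_nonneg]; exact inv_anti₀ two_pos hq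
  refine ⟨2 ^ (2⁻¹ - q⁻¹ : ℝ), fun v hv h2v => ?_⟩
  have hsup := enorm_sq_le_eLpNorm_mul_eLpNorm_fderiv_of_finrank_eq_one hE hv h2v
  have hV := eLpNorm_ofReal_eq_lintegral (μ := (volume : Measure E)) (f := v) two_pos
  rw [ENNReal.ofReal_ofNat] at hV
  set A := eLpNorm (fderiv ℝ v) 2 volume
  set V := eLpNorm v 2 volume
  replace hV : ∫⁻ x, ‖v x‖ₑ ^ (2 : ℝ) = V ^ (2 : ℝ) := by
    rw [hV, ← ENNReal.rpow_mul, inv_mul_cancel₀ two_ne_zero, ENNReal.rpow_one]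
  have hint : ∫⁻ x, ‖v x‖ₑ ^ q ≤ (2 * V * A) ^ ((q - 2) / 2) * V ^ (2 : ℝ) := by
    rw [← hV, ← lintegral_const_mul _ (hv.continuous.measurable.enorm.pow_const _)]
    refine lintegral_mono fun x => ?_
    calc ‖v x‖ₑ ^ q = (‖v x‖ₑ ^ 2) ^ ((q - 2) / 2) * ‖v x‖ₑ ^ (2 : ℝ) := by
          rw [← ENNReal.rpow_natCast, ← ENNReal.rpow_mul,
            ← ENNReal.rpow_add_of_nonneg _ _ (by push_cast; linarith) zero_le_two]
          congr 1; push_cast; ring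
      _ ≤ (2 * V * A) ^ ((q - 2) / 2) * ‖v x‖ₑ ^ (2 : ℝ) := by
          gcongr
          exact hsup x
  have ha : (q - 2) / 2 * q⁻¹ = 2⁻¹ - q⁻¹ := by field_simp
  rw [hE, Nat.cast_one, one_mul, eLpNorm_ofReal_eq_lintegral hq0,
    ENNReal.coe_rpow_of_nonneg _ hθ, ENNReal.coe_ofNat]
  calc (∫⁻ x, ‖v x‖ₑ ^ q) ^ q⁻¹
      ≤ ((2 * V * A) ^ ((q - 2) / 2) * V ^ (2 : ℝ)) ^ q⁻¹ := by gcongr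
    _ = 2 ^ (2⁻¹ - q⁻¹) * A ^ (2⁻¹ - q⁻¹) * (V ^ (2⁻¹ - q⁻¹) * V ^ (2 * q⁻¹)) := by
      rw [ENNReal.mul_rpow_of_nonneg _ _ (by positivity), ← ENNReal.rpow_mul, ← ENNReal.rpow_mul,
        ha, ENNReal.mul_rpow_of_nonneg _ _ hθ, ENNReal.mul_rpow_of_nonneg _ _ hθ]
      ring
    _ = 2 ^ (2⁻¹ - q⁻¹) * A ^ (2⁻¹ - q⁻¹) * V ^ (1 - (2⁻¹ - q⁻¹)) := by
      rw [← ENNReal.rpow_add_of_nonneg _ _ hθ (by positivity)]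
      congr 2; ring

theorem GagliardoNirenberg.of_one_le_finrank (hn : 1 ≤ finrank ℝ E) {q : ℝ} (hq : 2 ≤ q)
    (hθ : (finrank ℝ E : ℝ) * (2⁻¹ - q⁻¹) ≤ 1) :
    GagliardoNirenberg (volume : Measure E) q ((finrank ℝ E : ℝ) * (2⁻¹ - q⁻¹)) := by
  obtain h | h | h : finrank ℝ E = 1 ∨ finrank ℝ E = 2 ∨ 3 ≤ finrank ℝ E := by omega
  · exact of_finrank_eq_one h hq
  · exact of_finrank_eq_two _ h hq
  · exact of_three_le_finrank _ h hq hθ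

theorem GagliardoNirenberg.exists_abs_integral_mul_inner_gradient_le {p q θ : ℝ}
    (hGN : GagliardoNirenberg (volume : Measure E) q θ) (hp : 0 < p) (hq : 0 < q)
    (hpq : q⁻¹ + p⁻¹ = 2⁻¹) (hθ₀ : 0 ≤ θ) (hθ₁ : θ ≤ 1) :
    ∃ C : ℝ≥0, ∀ (v : E → ℝ) (b : E → E), ContDiff ℝ 1 v → HasCompactSupport v →
      AEStronglyMeasurable b → MemLp b (.ofReal p) →
      |∫ x, v x * ⟪b x, gradient v x⟫| ≤ C * lpNorm (gradient v) 2 volume ^ (1 + θ) *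
        lpNorm v 2 volume ^ (1 - θ) * lpNorm b (.ofReal p) volume := by
  obtain ⟨C, hC⟩ := hGN
  refine ⟨C, fun v b hv h2v hb hbp => ?_⟩
  have hgrad := hv.continuous_gradient
  have hgrad_norm : eLpNorm (gradient v) 2 volume = eLpNorm (fderiv ℝ v) 2 volume :=
    eLpNorm_congr_norm_ae (.of_forall (norm_gradient_eq v))
  have : ENNReal.HolderTriple (.ofReal q) (.ofReal p) 2 := ⟨by
    rw [← ENNReal.ofReal_inv_of_pos hq, ← ENNReal.ofReal_inv_of_pos hp,
      ← ENNReal.ofReal_add (by positivity) (by positivity), hpq, ENNReal.ofReal_inv_of_pos two_pos,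
      ENNReal.ofReal_ofNat]⟩
  set A := eLpNorm (gradient v) 2 volume
  set V := eLpNorm v 2 volume
  set B := eLpNorm b (.ofReal p) volume
  have hA : A ≠ ∞ := by
    rw [hgrad_norm]
    exact ((hv.continuous_fderiv one_ne_zero).memLp_of_hasCompactSupport
      (h2v.fderiv ℝ)).eLpNorm_ne_top
  have hV : V ≠ ∞ := (hv.continuous.memLp_of_hasCompactSupport h2v).eLpNorm_ne_top
  have hbound : ‖∫ x, v x * ⟪b x, gradient v x⟫‖ₑ ≤ C * A ^ (1 + θ) * V ^ (1 - θ) * B :=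
    calc ‖∫ x, v x * ⟪b x, gradient v x⟫‖ₑ ≤ ∫⁻ x, ‖v x * ⟪b x, gradient v x⟫‖ₑ :=
          enorm_integral_le_lintegral_enorm _
      _ ≤ eLpNorm v (.ofReal q) volume * B * A :=
          lintegral_enorm_mul_inner_le hv.continuous.aestronglyMeasurable hb
            hgrad.aestronglyMeasurable
      _ ≤ C * A ^ θ * V ^ (1 - θ) * B * A := by
          gcongr
          rw [hgrad_norm]
          exact hC v hv h2v
      _ = C * A ^ (1 + θ) * V ^ (1 - θ) * B := by
          rw [ENNReal.rpow_add_of_nonneg _ _ zero_le_one hθ₀, ENNReal.rpow_one]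
          ring
  have hfin : (C : ℝ≥0∞) * A ^ (1 + θ) * V ^ (1 - θ) * B ≠ ∞ := by
    have := hbp.eLpNorm_ne_top
    apply_rules [ENNReal.mul_ne_top, ENNReal.rpow_ne_top_of_nonneg, ENNReal.coe_ne_top] <;>
      linarith
  have := ENNReal.toReal_mono hfin hbound
  rw [ENNReal.toReal_mul, ENNReal.toReal_mul, ENNReal.toReal_mul, ← ENNReal.toReal_rpow,
    ← ENNReal.toReal_rpow, toReal_eLpNorm hgrad.aestronglyMeasurable,
    toReal_eLpNorm hv.continuous.aestronglyMeasurable, toReal_eLpNorm hb, toReal_enorm,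
    Real.norm_eq_abs] at this
  exact this

end InnerProductSpace

/-- `|∫ v (b·∇v)| ≤ (σ²/2) ∫ |∇v|² + C (∫ v²) (∫ |b|^p)^{2/(p-d)}` for `p > d`, `σ ≠ 0`. -/
theorem stmt4 (d : ℕ) (p σ : ℝ) (hd : 1 ≤ d) (hdp : (d : ℝ) < p) (hp : 2 < p) (hσ : σ ≠ 0) :
    ∃ C : ℝ, 0 < C ∧ ∀ (v : EuclideanSpace ℝ (Fin d) → ℝ)
      (b : EuclideanSpace ℝ (Fin d) → EuclideanSpace ℝ (Fin d)),
      ContDiff ℝ 1 v → HasCompactSupport v → Measurable b →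
      Integrable (fun x => ‖b x‖ ^ p) →
      |∫ x, v x * ⟪b x, gradient v x⟫| ≤
        σ ^ 2 / 2 * (∫ x, ‖gradient v x‖ ^ 2) +
          C * (∫ x, (v x) ^ 2) * (∫ x, ‖b x‖ ^ p) ^ (2 / (p - (d : ℝ))) := by
  have hp0 : 0 < p := by linarith
  have hθ : (d : ℝ) / p < 1 := (div_lt_one hp0).2 hdp
  have hexp : (finrank ℝ (EuclideanSpace ℝ (Fin d)) : ℝ) * (2⁻¹ - (2 * p / (p - 2))⁻¹) = d / p := by
    rw [finrank_euclideanSpace_fin]; field_simp; ring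
  have hGN := GagliardoNirenberg.of_one_le_finrank (by simpa using hd)
    (by rw [le_div_iff₀ (by linarith)]; linarith) (hexp ▸ hθ.le)
  rw [hexp] at hGN
  obtain ⟨C, hC⟩ := hGN.exists_abs_integral_mul_inner_gradient_le hp0
    (div_pos (by linarith) (by linarith)) (by field_simp; ring) (by positivity) hθ.le
  obtain ⟨K, hK, hY⟩ := exists_mul_rpow_mul_rpow_le C.2 (by positivity : 0 < σ ^ 2 / 2)
    (by linarith [(by positivity : (0 : ℝ) ≤ d / p)]) hθ
  refine ⟨K + 1, by positivity, fun v b hv h2v hb hbp => ?_⟩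
  have hgrad := hv.continuous_gradient
  have hbL : MemLp b (.ofReal p) volume :=
    (integrable_norm_rpow_iff hb.aestronglyMeasurable (by simpa using hp0) ENNReal.ofReal_ne_top).1
      (by simpa [ENNReal.toReal_ofReal hp0.le] using hbp)
  have hv2 : ∫ x, (v x) ^ 2 = lpNorm v 2 volume ^ 2 := by
    simp [lpNorm_two_sq_eq_integral hv.continuous.aestronglyMeasurable]
  rw [← lpNorm_two_sq_eq_integral hgrad.aestronglyMeasurable, hv2,
    ← lpNorm_ofReal_rpow_eq_integral hb.aestronglyMeasurable hp0, ← Real.rpow_mul lpNorm_nonneg,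
    show p * (2 / (p - d)) = 2 / (1 - d / p) by field_simp]
  calc |∫ x, v x * ⟪b x, gradient v x⟫|
      ≤ C * lpNorm (gradient v) 2 volume ^ (1 + d / p) * lpNorm v 2 volume ^ (1 - d / p) *
          lpNorm b (.ofReal p) volume := hC v b hv h2v hb.aestronglyMeasurable hbL
    _ ≤ σ ^ 2 / 2 * lpNorm (gradient v) 2 volume ^ 2 +
          K * lpNorm v 2 volume ^ 2 * lpNorm b (.ofReal p) volume ^ (2 / (1 - d / p)) :=
        hY _ _ _ lpNorm_nonneg lpNorm_nonneg lpNorm_nonneg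
    _ ≤ _ := by
        have := Real.rpow_nonneg (lpNorm_nonneg (f := b) (p := .ofReal p) (μ := volume))
          (2 / (1 - d / p))
        gcongr
        linarith
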